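/- Let Θ(y,z) := diag(Jᵀy) + U(z) + U(z)ᵀ for y ∈ ℝ^{n−1}, z ∈ ℝ^{n(n−1)/2}, where J = [I_{n−1}, −1] ∈ ℝ^{(n−1)×n} and U(z) is the strictly upper-triangular matrix built coordinatewise from z. With c := (1/2 + 1/(2n))e_{nn} + Σ_{i<n} e_{ii}/(2n), the set C := {(y,z) : c + Θ(y,z) ⪰ 0} (the reparametrized set of unit-trace PSD matrices) satisfies B(n^{−3/2}/4) ⊆ C ⊆ B(2√n) in the Euclidean norm ‖(y,z)‖ = ‖y‖ + ‖z‖. -/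

import Mathlib

/-!
Write `c + Θ(y, z) = diag(c + Jᵀy) + (U(z) + U(z)ᵀ)`. Its diagonal entries are at least
`1/(2n) - √n ‖y‖`, while Cauchy–Schwarz gives `|xᵀ U(z) x| ≤ ‖U(z)‖_F ‖x‖² = ‖z‖ ‖x‖²`, so the
matrix is PSD once `√n ‖y‖ + 2 ‖z‖ ≤ 1/(2n)`. Conversely `c + Θ(y, z)` has trace one, so when it
is PSD its diagonal lies in `[0, 1]`, which gives `|y_i| ≤ 1`, and its entries satisfy
`a_ij² ≤ a_ii a_jj`, which gives `‖z‖² ≤ Σ a_ij² ≤ (tr)² = 1`.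
-/

/-- Index type for the strictly-upper-triangular entries of an `n × n` matrix:
there are `n(n−1)/2` of them. -/
abbrev StrictUpperIdx (n : ℕ) := {p : Fin n × Fin n // p.1 < p.2}

/-- `U(z)`: the strictly upper-triangular matrix built coordinatewise from `z`. -/
noncomputable def Umat {n : ℕ} (z : EuclideanSpace ℝ (StrictUpperIdx n)) :
    Matrix (Fin n) (Fin n) ℝ :=
  fun i j => if h : i < j then z ⟨(i, j), h⟩ else 0

/-- `Θ(y, z) = diag(Jᵀ y) + U(z) + U(z)ᵀ`, where `J = [I_{n−1}, −1]`, i.e.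
`(Jᵀ y)_i = y_i` for `i < n − 1` and `(Jᵀ y)_{n−1} = −Σ_k y_k`. -/
noncomputable def ThetaMat {n : ℕ} (y : EuclideanSpace ℝ (Fin (n - 1)))
    (z : EuclideanSpace ℝ (StrictUpperIdx n)) : Matrix (Fin n) (Fin n) ℝ :=
  Matrix.diagonal (fun i : Fin n => if h : (i : ℕ) < n - 1 then y ⟨i, h⟩ else -∑ k, y k)
    + Umat z + (Umat z).transpose

/-- `c = (1/2 + 1/(2n)) e_{nn} + Σ_{i<n} e_{ii}/(2n)`. -/
noncomputable def cMat (n : ℕ) : Matrix (Fin n) (Fin n) ℝ :=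
  Matrix.diagonal (fun i : Fin n =>
    if (i : ℕ) = n - 1 then 1 / 2 + 1 / (2 * (n : ℝ)) else 1 / (2 * (n : ℝ)))

open Finset Matrix

section Quadratic

variable {ι : Type*}

theorem Matrix.PosSemidef.sq_apply_le_mul_diag {A : Matrix ι ι ℝ} (hA : A.PosSemidef)
    (i j : ι) : A i j ^ 2 ≤ A i i * A j j := by
  have hdet := (hA.submatrix ![i, j]).det_nonneg
  rw [det_fin_two] at hdet
  have hsymm : A j i = A i j := hA.isHermitian.apply i j
  simp only [submatrix_apply, Matrix.cons_val_zero, Matrix.cons_val_one, hsymm] at hdet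
  linarith

variable [Fintype ι]

theorem Matrix.PosSemidef.sum_sq_apply_le_trace_sq {A : Matrix ι ι ℝ} (hA : A.PosSemidef) :
    ∑ i, ∑ j, A i j ^ 2 ≤ A.trace ^ 2 :=
  calc ∑ i, ∑ j, A i j ^ 2 ≤ ∑ i, ∑ j, A i i * A j j :=
        sum_le_sum fun i _ => sum_le_sum fun j _ => hA.sq_apply_le_mul_diag i j
    _ = A.trace ^ 2 := by rw [sq, trace, sum_mul_sum]; rfl

theorem Matrix.PosSemidef.apply_le_trace {A : Matrix ι ι ℝ} (hA : A.PosSemidef) (i : ι) :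
    A i i ≤ A.trace :=
  single_le_sum (f := fun j => A j j) (fun _ _ => hA.diag_nonneg) (mem_univ i)

theorem sq_dotProduct_mulVec_le (M : Matrix ι ι ℝ) (x : ι → ℝ) :
    (x ⬝ᵥ M *ᵥ x) ^ 2 ≤ (∑ i, ∑ j, M i j ^ 2) * (x ⬝ᵥ x) ^ 2 := by
  have hform : x ⬝ᵥ M *ᵥ x = ∑ q : ι × ι, M q.1 q.2 * (x q.1 * x q.2) := by
    simp only [dotProduct, mulVec, Fintype.sum_prod_type, mul_sum]
    exact sum_congr rfl fun i _ => sum_congr rfl fun j _ => by ring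
  have hnorm : ∑ q : ι × ι, (x q.1 * x q.2) ^ 2 = (x ⬝ᵥ x) ^ 2 := by
    simp only [dotProduct, Fintype.sum_prod_type, sq, sum_mul_sum]
    exact sum_congr rfl fun i _ => sum_congr rfl fun j _ => by ring
  rw [hform, ← hnorm, ← Fintype.sum_prod_type']
  exact sum_mul_sq_le_sq_mul_sq _ _ _

theorem mul_dotProduct_le_dotProduct_diagonal_mulVec [DecidableEq ι] {d : ι → ℝ} {m : ℝ}
    (hd : ∀ i, m ≤ d i) (x : ι → ℝ) : m * (x ⬝ᵥ x) ≤ x ⬝ᵥ diagonal d *ᵥ x := by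
  simp only [dotProduct, mulVec_diagonal, mul_sum]
  exact sum_le_sum fun i _ => by nlinarith [hd i, mul_self_nonneg (x i)]

theorem posSemidef_diagonal_add_add_transpose [DecidableEq ι] {d : ι → ℝ} {U : Matrix ι ι ℝ}
    (hd : ∀ i, 2 * √(∑ i, ∑ j, U i j ^ 2) ≤ d i) : (diagonal d + (U + Uᵀ)).PosSemidef := by
  have hherm : (diagonal d + (U + Uᵀ)).IsHermitian :=
    (isHermitian_diagonal d).add (by simp [IsHermitian, add_comm])
  refine .of_dotProduct_mulVec_nonneg hherm fun x => ?_
  set F := √(∑ i, ∑ j, U i j ^ 2)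
  have hdiag := mul_dotProduct_le_dotProduct_diagonal_mulVec hd x
  have hcross : -(F * (x ⬝ᵥ x)) ≤ x ⬝ᵥ U *ᵥ x := by
    refine (abs_le_of_sq_le_sq' ?_ (mul_nonneg (Real.sqrt_nonneg _) ?_)).1
    · rw [mul_pow, Real.sq_sqrt (by positivity)]
      exact sq_dotProduct_mulVec_le U x
    · exact dotProduct_self_star_nonneg x
  simp only [star_trivial, add_mulVec, dotProduct_add, dotProduct_transpose_mulVec]
  linarith

theorem EuclideanSpace.abs_sum_le_sqrt_card_mul_norm (y : EuclideanSpace ℝ ι) :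
    |∑ k, y k| ≤ √(Fintype.card ι) * ‖y‖ := by
  refine abs_le_of_sq_le_sq ?_ (by positivity)
  calc (∑ k, y k) ^ 2 ≤ Fintype.card ι * ∑ k, y k ^ 2 := by
        simpa using sq_sum_le_card_mul_sum_sq (s := univ) (f := fun k => y k)
    _ = (√(Fintype.card ι) * ‖y‖) ^ 2 := by
        rw [mul_pow, Real.sq_sqrt (Nat.cast_nonneg _), EuclideanSpace.real_norm_sq_eq]

end Quadratic

section Reparametrization

variable {n : ℕ}

noncomputable def cDiag (n : ℕ) : Fin n → ℝ :=
  fun i => if (i : ℕ) = n - 1 then 1 / 2 + 1 / (2 * (n : ℝ)) else 1 / (2 * (n : ℝ))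

/-- `Jᵀ y`. -/
noncomputable def thetaDiag (y : EuclideanSpace ℝ (Fin (n - 1))) : Fin n → ℝ :=
  fun i => if h : (i : ℕ) < n - 1 then y ⟨i, h⟩ else -∑ k, y k

theorem cMat_add_ThetaMat (y : EuclideanSpace ℝ (Fin (n - 1)))
    (z : EuclideanSpace ℝ (StrictUpperIdx n)) :
    cMat n + ThetaMat y z = diagonal (cDiag n + thetaDiag y) + (Umat z + (Umat z)ᵀ) := by
  change diagonal (cDiag n) + (diagonal (thetaDiag y) + Umat z + (Umat z)ᵀ) = _
  rw [Pi.add_def, ← diagonal_add]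
  abel

theorem cMat_add_ThetaMat_apply_self (y : EuclideanSpace ℝ (Fin (n - 1)))
    (z : EuclideanSpace ℝ (StrictUpperIdx n)) (i : Fin n) :
    (cMat n + ThetaMat y z) i i = cDiag n i + thetaDiag y i := by
  rw [cMat_add_ThetaMat]
  simp [Umat]

theorem trace_Umat (z : EuclideanSpace ℝ (StrictUpperIdx n)) : (Umat z).trace = 0 := by
  simp [trace, Umat]

theorem le_cDiag (i : Fin n) : 1 / (2 * (n : ℝ)) ≤ cDiag n i := by
  unfold cDiag
  split_ifs <;> linarith

theorem sum_cDiag (hn : 1 ≤ n) : ∑ i, cDiag n i = 1 := by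
  obtain ⟨m, rfl⟩ : ∃ m, n = m + 1 := ⟨n - 1, by omega⟩
  have hlast : cDiag (m + 1) (Fin.last m) = 1 / 2 + 1 / (2 * ((m + 1 : ℕ) : ℝ)) := if_pos rfl
  have hcs (i : Fin m) : cDiag (m + 1) i.castSucc = 1 / (2 * ((m + 1 : ℕ) : ℝ)) :=
    if_neg (by simp [i.isLt.ne])
  simp only [Fin.sum_univ_castSucc, hlast, hcs, sum_const, card_univ, Fintype.card_fin,
    nsmul_eq_mul]
  field_simp
  push_cast
  ring

theorem sum_thetaDiag (y : EuclideanSpace ℝ (Fin (n - 1))) : ∑ i, thetaDiag y i = 0 := by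
  rcases n with _ | m
  · simp
  have hlast : thetaDiag y (Fin.last m) = -∑ k, y k := dif_neg (by simp)
  have hcs (i : Fin m) : thetaDiag y i.castSucc = y i := dif_pos i.isLt
  simp only [Fin.sum_univ_castSucc, hlast, hcs]
  exact add_neg_cancel _

theorem trace_cMat_add_ThetaMat (hn : 1 ≤ n) (y : EuclideanSpace ℝ (Fin (n - 1)))
    (z : EuclideanSpace ℝ (StrictUpperIdx n)) : (cMat n + ThetaMat y z).trace = 1 := by
  rw [cMat_add_ThetaMat, trace_add, trace_diagonal, trace_add, trace_transpose, trace_Umat]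
  simp only [Pi.add_apply, sum_add_distrib, sum_cDiag hn, sum_thetaDiag]
  ring

theorem abs_thetaDiag_le (y : EuclideanSpace ℝ (Fin (n - 1))) (i : Fin n) :
    |thetaDiag y i| ≤ √n * ‖y‖ := by
  unfold thetaDiag
  split_ifs
  · have h1 : (1 : ℝ) ≤ √n := Real.one_le_sqrt.mpr (by exact_mod_cast i.pos)
    calc |y _| ≤ ‖y‖ := by simpa using PiLp.norm_apply_le y _
      _ ≤ √n * ‖y‖ := le_mul_of_one_le_left (norm_nonneg y) h1
  · rw [abs_neg]
    refine (EuclideanSpace.abs_sum_le_sqrt_card_mul_norm y).trans ?_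
    gcongr
    simp

theorem sum_sq_Umat (z : EuclideanSpace ℝ (StrictUpperIdx n)) :
    ∑ i, ∑ j, Umat z i j ^ 2 = ‖z‖ ^ 2 := by
  rw [EuclideanSpace.real_norm_sq_eq, ← Fintype.sum_prod_type',
    ← Fintype.sum_subtype_add_sum_subtype (fun q : Fin n × Fin n => q.1 < q.2),
    Fintype.sum_eq_zero (fun q : {q : Fin n × Fin n // ¬q.1 < q.2} => Umat z q.1.1 q.1.2 ^ 2)
    (fun q => by simp [Umat, q.2]), add_zero]
  exact sum_congr rfl fun p _ => by simp [Umat, p.2]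

theorem posSemidef_cMat_add_ThetaMat {y : EuclideanSpace ℝ (Fin (n - 1))}
    {z : EuclideanSpace ℝ (StrictUpperIdx n)} (h : √n * ‖y‖ + 2 * ‖z‖ ≤ 1 / (2 * n)) :
    (cMat n + ThetaMat y z).PosSemidef := by
  rw [cMat_add_ThetaMat]
  refine posSemidef_diagonal_add_add_transpose fun i => ?_
  rw [sum_sq_Umat, Real.sqrt_sq (norm_nonneg z)]
  have hc := le_cDiag i
  have hθ := (abs_le.mp (abs_thetaDiag_le y i)).1
  simp only [Pi.add_apply]
  linarith

theorem norm_le_sqrt_of_posSemidef (hn : 1 ≤ n) {y : EuclideanSpace ℝ (Fin (n - 1))}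
    {z : EuclideanSpace ℝ (StrictUpperIdx n)} (hA : (cMat n + ThetaMat y z).PosSemidef) :
    ‖y‖ ≤ √n := by
  have hy (k : Fin (n - 1)) : |y k| ≤ 1 := by
    let i : Fin n := ⟨k, by omega⟩
    have hAii : (cMat n + ThetaMat y z) i i = 1 / (2 * n) + y k := by
      rw [cMat_add_ThetaMat_apply_self]
      simp [i, cDiag, thetaDiag, k.isLt.ne]
    have hc : 1 / (2 * (n : ℝ)) ≤ 1 := by
      rw [div_le_one (by positivity)]
      norm_cast
      omega
    have hAii_le : (cMat n + ThetaMat y z) i i ≤ 1 :=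
      trace_cMat_add_ThetaMat hn y z ▸ hA.apply_le_trace i
    simpa [hAii] using
      abs_sub_le_of_nonneg_of_le hA.diag_nonneg hAii_le (by positivity) hc
  refine Real.le_sqrt_of_sq_le ?_
  calc ‖y‖ ^ 2 = ∑ k, y k ^ 2 := EuclideanSpace.real_norm_sq_eq y
    _ ≤ ∑ _k : Fin (n - 1), (1 : ℝ) := sum_le_sum fun k _ => by
        simpa using pow_le_one₀ (abs_nonneg (y k)) (hy k) (n := 2)
    _ ≤ n := by simp

theorem norm_le_one_of_posSemidef (hn : 1 ≤ n) {y : EuclideanSpace ℝ (Fin (n - 1))}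
    {z : EuclideanSpace ℝ (StrictUpperIdx n)} (hA : (cMat n + ThetaMat y z).PosSemidef) :
    ‖z‖ ≤ 1 := by
  have hU (i j : Fin n) : Umat z i j ^ 2 ≤ (cMat n + ThetaMat y z) i j ^ 2 := by
    by_cases hij : i < j
    · rw [cMat_add_ThetaMat]
      simp [Umat, hij, hij.ne, hij.not_gt]
    · rw [show Umat z i j = 0 from dif_neg hij, zero_pow two_ne_zero]
      exact sq_nonneg _
  refine (pow_le_one_iff_of_nonneg (norm_nonneg z) two_ne_zero).mp ?_
  calc ‖z‖ ^ 2 = ∑ i, ∑ j, Umat z i j ^ 2 := (sum_sq_Umat z).symm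
    _ ≤ ∑ i, ∑ j, (cMat n + ThetaMat y z) i j ^ 2 :=
        sum_le_sum fun i _ => sum_le_sum fun j _ => hU i j
    _ ≤ (cMat n + ThetaMat y z).trace ^ 2 := hA.sum_sq_apply_le_trace_sq
    _ = 1 := by rw [trace_cMat_add_ThetaMat hn, one_pow]

end Reparametrization

/-- The reparametrized set of unit-trace PSD matrices,
`C = {(y, z) : c + Θ(y, z) ⪰ 0}`, satisfies `B(n^{−3/2}/4) ⊆ C ⊆ B(2√n)` for
the norm `‖(y, z)‖ = ‖y‖ + ‖z‖`. -/
theorem psd_unit_trace_reparam_ball_sandwich (n : ℕ) (hn : 2 ≤ n) :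
    (∀ (y : EuclideanSpace ℝ (Fin (n - 1))) (z : EuclideanSpace ℝ (StrictUpperIdx n)),
        ‖y‖ + ‖z‖ ≤ 1 / (4 * (n : ℝ) * Real.sqrt n) →
          (cMat n + ThetaMat y z).PosSemidef) ∧
      ∀ (y : EuclideanSpace ℝ (Fin (n - 1))) (z : EuclideanSpace ℝ (StrictUpperIdx n)),
        (cMat n + ThetaMat y z).PosSemidef → ‖y‖ + ‖z‖ ≤ 2 * Real.sqrt n := by
  have hn1 : 1 ≤ n := by omega
  have hsqrt : (1 : ℝ) ≤ √n := Real.one_le_sqrt.mpr (by exact_mod_cast hn1)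
  refine ⟨fun y z hyz => posSemidef_cMat_add_ThetaMat ?_, fun y z hA => ?_⟩
  · calc √n * ‖y‖ + 2 * ‖z‖ ≤ 2 * √n * (‖y‖ + ‖z‖) := by
          nlinarith [norm_nonneg y, norm_nonneg z]
      _ ≤ 2 * √n * (1 / (4 * n * √n)) := by gcongr
      _ = 1 / (2 * n) := by field_simp; ring
  · linarith [norm_le_sqrt_of_posSemidef hn1 hA, norm_le_one_of_posSemidef hn1 hA]
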